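/- Let 1/2 ≤ λ ≤ 1. For every ρ₀ ∈ L₀(λ) and ρ₁ ∈ L₁(λ), the trace distance satisfies D(ρ₀, ρ₁) ≥ 2λ − 1. -/

import Mathlib

open Matrix Kronecker ComplexOrder

noncomputable section

/-- |v⟩⟨v| : the rank-one outer product v v†. -/
def outer {n : Type*} (v : n → ℂ) : Matrix n n ℂ := Matrix.vecMulVec v (star v)

open Classical in
/-- Square root of a positive semidefinite matrix (junk value 0 if not PSD). -/
def psdSqrt {n : Type*} [Fintype n] [DecidableEq n] (A : Matrix n n ℂ) : Matrix n n ℂ :=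
  if h : A.PosSemidef then
    (h.1.eigenvectorUnitary : Matrix n n ℂ) * diagonal ((↑) ∘ (√·) ∘ h.1.eigenvalues) *
      (star (h.1.eigenvectorUnitary : Matrix n n ℂ))
  else 0

/-- |A| = √(A†A). -/
def matAbs {n : Type*} [Fintype n] [DecidableEq n] (A : Matrix n n ℂ) : Matrix n n ℂ :=
  psdSqrt (Aᴴ * A)

/-- Trace distance D(ρ,σ) = (1/2)·tr |σ - ρ|. -/
def trDist {n : Type*} [Fintype n] [DecidableEq n] (ρ σ : Matrix n n ℂ) : ℝ :=
  (1 / 2) * ((matAbs (σ - ρ)).trace).re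

/-- Fidelity F(ρ,σ) = tr √(√ρ · σ · √ρ). -/
def fid {n : Type*} [Fintype n] [DecidableEq n] (ρ σ : Matrix n n ℂ) : ℝ :=
  ((psdSqrt (psdSqrt ρ * σ * psdSqrt ρ)).trace).re

/-- F(ρ, S) : the maximal fidelity of ρ with members of the set S. -/
def fidSet {n : Type*} [Fintype n] [DecidableEq n]
    (ρ : Matrix n n ℂ) (S : Set (Matrix n n ℂ)) : ℝ :=
  sSup (fid ρ '' S)

/-- The states |φᵇ_c(λ)⟩ in ℂ². -/
def phi (b c : Fin 2) (lam : ℝ) : Fin 2 → ℂ :=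
  if b = 0 then
    (if c = 0 then ![(Real.sqrt lam : ℂ), (Real.sqrt (1 - lam) : ℂ)]
     else ![(Real.sqrt (1 - lam) : ℂ), -(Real.sqrt lam : ℂ)])
  else
    (if c = 0 then ![(Real.sqrt lam : ℂ), -(Real.sqrt (1 - lam) : ℂ)]
     else ![(Real.sqrt (1 - lam) : ℂ), (Real.sqrt lam : ℂ)])

/-- The ensemble L_c(λ) = { p|φ⁰_c⟩⟨φ⁰_c| + (1-p)|φ¹_c⟩⟨φ¹_c| : p ∈ [0,1] }. -/
def Lset (c : Fin 2) (lam : ℝ) : Set (Matrix (Fin 2) (Fin 2) ℂ) :=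
  {ρ | ∃ p : ℝ, 0 ≤ p ∧ p ≤ 1 ∧
      ρ = (p : ℂ) • outer (phi 0 c lam) + ((1 - p : ℝ) : ℂ) • outer (phi 1 c lam)}

/-- p_x^y = λ if x = y, 1 - λ otherwise. -/
def pbit (lam : ℝ) (x y : Fin 2) : ℝ := if x = y then lam else 1 - lam

/-- ρ_c = λ|c⟩⟨c| + (1-λ)|1-c⟩⟨1-c|. -/
def rhoC (lam : ℝ) (c : Fin 2) : Matrix (Fin 2) (Fin 2) ℂ :=
  (lam : ℂ) • outer (Pi.single c 1) + ((1 - lam : ℝ) : ℂ) • outer (Pi.single (1 - c) 1)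

/-- Tensor product of two vectors. -/
def vtens {m n : Type*} (v : m → ℂ) (w : n → ℂ) : m × n → ℂ := fun x => v x.1 * w x.2

end

lemma matAbs_aux (a t : ℝ) :
    matAbs (!![(-a : ℂ), (t : ℂ); (t : ℂ), (a : ℂ)])
      = ((Real.sqrt (a ^ 2 + t ^ 2) : ℝ) : ℂ) • 1 := by
  set r : ℝ := Real.sqrt (a ^ 2 + t ^ 2) with hrdef
  have hr0 : 0 ≤ r := Real.sqrt_nonneg _
  have hr : r ^ 2 = a ^ 2 + t ^ 2 := Real.sq_sqrt (by positivity)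
  have hM : (!![(-a : ℂ), t; t, a])ᴴ * (!![(-a : ℂ), t; t, a])
      = Matrix.diagonal (fun _ => ((r ^ 2 : ℝ) : ℂ)) := by
    ext i j
    fin_cases i <;> fin_cases j <;>
      simp [Matrix.mul_apply, Fin.sum_univ_two, Matrix.conjTranspose_apply, hr] <;>
      push_cast <;> ring
  have hPSD : (Matrix.diagonal (fun _ : Fin 2 => ((r ^ 2 : ℝ) : ℂ))).PosSemidef :=
    Matrix.PosSemidef.diagonal (fun _ => by positivity)
  unfold matAbs psdSqrt
  rw [hM, dif_pos hPSD]
  have hsq : (((r : ℝ) : ℂ) • (1 : Matrix (Fin 2) (Fin 2) ℂ)) ^ 2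
      = Matrix.diagonal (fun _ : Fin 2 => ((r ^ 2 : ℝ) : ℂ)) := by
    rw [smul_pow, one_pow, Matrix.smul_one_eq_diagonal]
    congr 1
    ext i
    push_cast
    ring
  have hPSD' : (((r : ℝ) : ℂ) • (1 : Matrix (Fin 2) (Fin 2) ℂ)).PosSemidef := by
    rw [Matrix.smul_one_eq_diagonal]
    exact Matrix.PosSemidef.diagonal (fun _ => by positivity)
  have hU1 : star (hPSD.1.eigenvectorUnitary : Matrix (Fin 2) (Fin 2) ℂ) *
      (hPSD.1.eigenvectorUnitary : Matrix (Fin 2) (Fin 2) ℂ) = 1 := Unitary.coe_star_mul_self _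
  have hU2 : (hPSD.1.eigenvectorUnitary : Matrix (Fin 2) (Fin 2) ℂ) *
      star (hPSD.1.eigenvectorUnitary : Matrix (Fin 2) (Fin 2) ℂ) = 1 := Unitary.coe_mul_star_self _
  have hev : ∀ i, hPSD.1.eigenvalues i = r ^ 2 := by
    intro i
    have h := hPSD.1.conjStarAlgAut_star_eigenvectorUnitary
    rw [Unitary.conjStarAlgAut_star_apply] at h
    have key : ∀ U : Matrix (Fin 2) (Fin 2) ℂ, star U * U = 1 → star U *
        Matrix.diagonal (fun _ : Fin 2 => ((r ^ 2 : ℝ) : ℂ)) * U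
        = Matrix.diagonal (fun _ : Fin 2 => ((r ^ 2 : ℝ) : ℂ)) := by
      intro U hU
      rw [← Matrix.smul_one_eq_diagonal, Matrix.mul_smul, Matrix.mul_one, Matrix.smul_mul, hU]
    have h3 := h.symm.trans (key _ hU1)
    have h2 := congrFun (congrFun h3 i) i
    simp at h2
    exact_mod_cast h2
  have hD : diagonal (((↑) : ℝ → ℂ) ∘ (√·) ∘ hPSD.1.eigenvalues)
      = ((r : ℝ) : ℂ) • (1 : Matrix (Fin 2) (Fin 2) ℂ) := by
    rw [Matrix.smul_one_eq_diagonal]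
    congr 1
    ext i
    simp only [Function.comp_apply]
    rw [hev i, Real.sqrt_sq hr0]
  rw [hD, Matrix.mul_smul, Matrix.mul_one, Matrix.smul_mul, hU2]

/-- For 1/2 ≤ λ ≤ 1 and all ρ₀ ∈ L₀(λ), ρ₁ ∈ L₁(λ), D(ρ₀,ρ₁) ≥ 2λ - 1. -/
theorem stmt3 (lam : ℝ) (h0 : 1 / 2 ≤ lam) (h1 : lam ≤ 1) :
    ∀ ρ₀ ∈ Lset 0 lam, ∀ ρ₁ ∈ Lset 1 lam, trDist ρ₀ ρ₁ ≥ 2 * lam - 1 := by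
  rintro ρ₀ ⟨p, hp0, hp1, rfl⟩ ρ₁ ⟨q, hq0, hq1, rfl⟩
  have hl0 : (0 : ℝ) ≤ lam := by linarith
  have hl1 : (0 : ℝ) ≤ 1 - lam := by linarith
  have hsl : Real.sqrt lam * Real.sqrt lam = lam := Real.mul_self_sqrt hl0
  have hsm : Real.sqrt (1 - lam) * Real.sqrt (1 - lam) = 1 - lam := Real.mul_self_sqrt hl1
  set s : ℝ := Real.sqrt lam * Real.sqrt (1 - lam) with hs
  set a : ℝ := 2 * lam - 1 with ha
  set t : ℝ := (2 - 2 * p - 2 * q) * s with ht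
  have hΔ : ((q : ℂ) • outer (phi 0 1 lam) + ((1 - q : ℝ) : ℂ) • outer (phi 1 1 lam))
      - ((p : ℂ) • outer (phi 0 0 lam) + ((1 - p : ℝ) : ℂ) • outer (phi 1 0 lam))
      = !![(-a : ℂ), (t : ℂ); (t : ℂ), (a : ℂ)] := by
    ext i j
    fin_cases i <;> fin_cases j <;>
      simp [outer, phi, Matrix.vecMulVec_apply, ha, ht, hs, -Matrix.cons_vecMulVec] <;>
      norm_cast <;> (apply Complex.ext <;> simp <;> nlinarith [hsl, hsm])
  unfold trDist
  rw [hΔ, matAbs_aux]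
  have htr : ((((Real.sqrt (a ^ 2 + t ^ 2) : ℝ) : ℂ) •
      (1 : Matrix (Fin 2) (Fin 2) ℂ)).trace).re = 2 * Real.sqrt (a ^ 2 + t ^ 2) := by
    simp [Matrix.trace, Matrix.diag, Fin.sum_univ_two]
    try ring
  rw [htr]
  have ha0 : 0 ≤ a := by simp [ha]; linarith
  have : a ≤ Real.sqrt (a ^ 2 + t ^ 2) := by
    have h2 : a ^ 2 ≤ a ^ 2 + t ^ 2 := by nlinarith [sq_nonneg t]
    calc a = Real.sqrt (a ^ 2) := (Real.sqrt_sq ha0).symm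
      _ ≤ _ := Real.sqrt_le_sqrt h2
  simp [ha] at this ⊢
  linarith
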